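/- Let Y be a stationary process on a probability space with measure-preserving ergodic-decomposable shift, taking values in [0,∞]. Then P({|Y₀| ≠ ∞} ∩ {|Y_k| → ∞ as k → -∞}) = 0; that is, on the event that |Y_k| tends to infinity as k → -∞, Y₀ must be infinite almost surely. -/

import Mathlib

/-!
Poincaré recurrence, read backwards in time. If `Y₀ ≤ M` while `Y_{-k} > M` for all `k ≥ N`,
then the same event shifted by any `m ≥ N` is disjoint from it, since the shifted event
requires `Y_{m-m} = Y₀ > M`. A set disjoint from all its far preimages under a conservative
map is null, so a.s. `Y₀ ≤ M` forces `Y_{-k} ≤ M` infinitely often, which is incompatible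
with `Y_{-k} → ∞` as soon as `Y₀ < ∞`.
-/

open MeasureTheory Filter
open scoped ENNReal

namespace MeasureTheory.Conservative

variable {α : Type*} [MeasurableSpace α] {μ : Measure α} {f : α → α} {s : Set α}

theorem measure_eq_zero_of_disjoint_preimage_iterate (hf : Conservative f μ)
    (hs : NullMeasurableSet s μ) (N : ℕ) (hdisj : ∀ m > N, Disjoint s (f^[m] ⁻¹' s)) :
    μ s = 0 := by
  by_contra hs₀
  obtain ⟨m, hmN, hm⟩ := hf.exists_gt_measure_inter_ne_zero hs hs₀ N
  exact hm (by rw [(hdisj m hmN).inter_eq, measure_empty])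

end MeasureTheory.Conservative

section StationaryProcess

variable {Ω β : Type*} {θ : Ω → Ω} {Y : ℤ → Ω → β}

theorem comp_iterate_of_succ_eq_comp (hYs : ∀ n, Y (n + 1) = Y n ∘ θ) (n : ℤ) (j : ℕ) :
    Y n ∘ θ^[j] = Y (n + j) := by
  induction j with
  | zero => simp
  | succ j ih =>
    rw [Function.iterate_succ, ← Function.comp_assoc, ih, Nat.cast_succ, ← add_assoc, hYs]

theorem ae_frequently_neg_mem_of_mem [MeasurableSpace Ω] [MeasurableSpace β] {P : Measure Ω}
    (hθ : Conservative θ P) (hYm : ∀ n, Measurable (Y n)) (hYs : ∀ n, Y (n + 1) = Y n ∘ θ)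
    {B : Set β} (hB : MeasurableSet B) :
    ∀ᵐ ω ∂P, Y 0 ω ∈ B → ∃ᶠ k : ℕ in atTop, Y (-(k : ℤ)) ω ∈ B := by
  set E : ℕ → Set Ω := fun N => {ω | Y 0 ω ∈ B ∧ ∀ k ≥ N, Y (-(k : ℤ)) ω ∉ B}
  have hE_meas (N : ℕ) : MeasurableSet (E N) := by
    simp only [E, Set.ofPred_and, Set.ofPred_forall]
    exact (hYm 0 hB).inter <| .iInter fun k => .iInter fun _ => (hYm _ hB).compl
  have hE_null (N : ℕ) : P (E N) = 0 := by
    refine hθ.measure_eq_zero_of_disjoint_preimage_iterate (hE_meas N).nullMeasurableSet N ?_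
    refine fun m hmN => Set.disjoint_left.2 fun ω hω hω' => hω'.2 m hmN.le ?_
    have hshift : Y (-(m : ℤ)) (θ^[m] ω) = Y 0 ω := by
      rw [← Function.comp_apply (f := Y _), comp_iterate_of_succ_eq_comp hYs, neg_add_cancel]
    exact hshift ▸ hω.1
  filter_upwards [ae_all_iff.2 fun N => measure_eq_zero_iff_ae_notMem.1 (hE_null N)]
    with ω hω h0
  refine frequently_atTop.2 fun N => ?_
  by_contra! hN
  exact hω N ⟨h0, hN⟩

end StationaryProcess

/-- for a stationary `[0,∞]`-valued process, on the event that
`Y_k → ∞` as `k → -∞`, necessarily `Y₀ = ∞` a.s. -/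
theorem stmt_10 {Ω : Type*} [MeasurableSpace Ω] (P : Measure Ω) [IsProbabilityMeasure P]
    (θ : Ω → Ω) (hθ : MeasurePreserving θ P P)
    (Y : ℤ → Ω → ℝ≥0∞) (hYm : ∀ n, Measurable (Y n))
    (hYs : ∀ n, Y (n + 1) = Y n ∘ θ) :
    P {ω | Y 0 ω ≠ ⊤ ∧ Tendsto (fun k : ℕ => Y (-(k : ℤ)) ω) atTop (nhds ⊤)} = 0 := by
  have hrec : ∀ᵐ ω ∂P, ∀ M : ℕ,
      Y 0 ω ≤ M → ∃ᶠ k : ℕ in atTop, Y (-(k : ℤ)) ω ≤ M := ae_all_iff.2 fun M =>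
    ae_frequently_neg_mem_of_mem hθ.conservative hYm hYs (B := Set.Iic (M : ℝ≥0∞))
      measurableSet_Iic
  refine measure_eq_zero_iff_ae_notMem.2 ?_
  filter_upwards [hrec] with ω hω ⟨hfin, htop⟩
  obtain ⟨M, hM⟩ := ENNReal.exists_nat_gt hfin
  exact hω M hM.le ((ENNReal.tendsto_nhds_top_iff_nat.1 htop M).mono fun _ => not_le.2)
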